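/- Let X and Y be Polish spaces, P ∈ P(X), c : X × X → [0,∞] a Borel transportation cost on X, ε ≥ 0, and f : X → Y an injective Borel map admitting a Borel left inverse g : Y → X (i.e., g ∘ f = id_X). Then f_# B_ε^c(P) = (f ∘ g)_# B_ε^{c∘(g×g)}(f_#P), and consequently f_# B_ε^c(P) ⊆ B_ε^{c∘(g×g)}(f_#P), where c∘(g×g) is the cost (y₁,y₂) ↦ c(g(y₁), g(y₂)) on Y. -/

import Mathlib

open MeasureTheory
open scoped ENNReal

noncomputable section

/-- The set of couplings of two measures. -/
def couplings {X : Type*} [MeasurableSpace X] (P Q : Measure X) :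
    Set (Measure (X × X)) :=
  {γ | IsProbabilityMeasure γ ∧ γ.map Prod.fst = P ∧ γ.map Prod.snd = Q}

/-- Optimal transport discrepancy with transportation cost `c`. -/
def OTCost {X : Type*} [MeasurableSpace X] (c : X × X → ℝ≥0∞) (P Q : Measure X) : ℝ≥0∞ :=
  ⨅ γ ∈ couplings P Q, ∫⁻ x, c x ∂γ

/-- The optimal transport ambiguity set of radius `ε` around `P`, for cost `c`. -/
def ambiguitySet {X : Type*} [MeasurableSpace X] (c : X × X → ℝ≥0∞) (ε : ℝ≥0∞)
    (P : Measure X) : Set (Measure X) :=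
  {Q | IsProbabilityMeasure Q ∧ OTCost c P Q ≤ ε}

/-!
Pushing a coupling of `P` and `Q` forward along `h × h` gives a coupling of `h_# P` and `h_# Q`
of the same cost whenever the cost on the target agrees with the cost on the source along `h`,
so `h_#` maps ambiguity sets into ambiguity sets. Applied to `f` this gives the inclusion; applied
to `g`, using `g_# f_# P = P`, it shows that every `(f ∘ g)_# R = f_# (g_# R)` with `R` in the
target ambiguity set comes from the source one, while `(f ∘ g)_# f_# Q = f_# Q` gives the converse.
-/

section

variable {X Y : Type*} [MeasurableSpace X] [MeasurableSpace Y]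

lemma map_prodMap_mem_couplings {h : X → Y} (hh : Measurable h) {P Q : Measure X}
    {γ : Measure (X × X)} (hγ : γ ∈ couplings P Q) :
    γ.map (Prod.map h h) ∈ couplings (P.map h) (Q.map h) := by
  obtain ⟨hγ, hfst, hsnd⟩ := hγ
  refine ⟨Measure.isProbabilityMeasure_map (hh.prodMap hh).aemeasurable, ?_, ?_⟩
  · rw [Measure.map_map measurable_fst (hh.prodMap hh), ← hfst, Measure.map_map hh measurable_fst]
    rfl
  · rw [Measure.map_map measurable_snd (hh.prodMap hh), ← hsnd, Measure.map_map hh measurable_snd]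
    rfl

lemma OTCost_map_le {c : X × X → ℝ≥0∞} {c' : Y × Y → ℝ≥0∞} (hc' : Measurable c')
    {h : X → Y} (hh : Measurable h) (hcc : ∀ x₁ x₂, c' (h x₁, h x₂) = c (x₁, x₂))
    (P Q : Measure X) :
    OTCost c' (P.map h) (Q.map h) ≤ OTCost c P Q :=
  le_iInf₂ fun γ hγ => iInf₂_le_of_le _ (map_prodMap_mem_couplings hh hγ) <| by
    rw [lintegral_map hc' (hh.prodMap hh)]
    exact (lintegral_congr fun x : X × X => hcc x.1 x.2).le

lemma mapsTo_map_ambiguitySet {c : X × X → ℝ≥0∞} {c' : Y × Y → ℝ≥0∞} (hc' : Measurable c')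
    {h : X → Y} (hh : Measurable h) (hcc : ∀ x₁ x₂, c' (h x₁, h x₂) = c (x₁, x₂))
    (ε : ℝ≥0∞) (P : Measure X) :
    Set.MapsTo (fun μ => μ.map h) (ambiguitySet c ε P) (ambiguitySet c' ε (P.map h)) :=
  fun Q ⟨_, hQε⟩ =>
    ⟨Measure.isProbabilityMeasure_map hh.aemeasurable, (OTCost_map_le hc' hh hcc P Q).trans hQε⟩

end

theorem pushforward_ambiguity_injective_general
    {X Y : Type*}
    [MeasurableSpace X]
    [MeasurableSpace Y]
    (P : Measure X)
    (c : X × X → ℝ≥0∞) (hc : Measurable c) (ε : ℝ≥0∞)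
    (f : X → Y) (hf : Measurable f)
    (g : Y → X) (hg : Measurable g) (hgf : ∀ x, g (f x) = x) :
    (fun μ => μ.map f) '' ambiguitySet c ε P
        = (fun μ => μ.map (f ∘ g)) ''
            ambiguitySet (fun y => c (g y.1, g y.2)) ε (P.map f)
      ∧ (fun μ => μ.map f) '' ambiguitySet c ε P
          ⊆ ambiguitySet (fun y => c (g y.1, g y.2)) ε (P.map f) := by
  have hgf' : g ∘ f = id := funext hgf
  have push_f := mapsTo_map_ambiguitySet (c := c) (c' := fun y => c (g y.1, g y.2))
    (hc.comp (hg.prodMap hg)) hf (fun x₁ x₂ => by simp only [hgf]) ε P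
  have pull_g := mapsTo_map_ambiguitySet (c := fun y => c (g y.1, g y.2)) hc hg
    (fun _ _ => rfl) ε (P.map f)
  rw [Measure.map_map hg hf, hgf', Measure.map_id] at pull_g
  refine ⟨subset_antisymm ?_ ?_, push_f.image_subset⟩
  · rintro _ ⟨Q, hQ, rfl⟩
    refine ⟨Q.map f, push_f hQ, ?_⟩
    dsimp only
    rw [Measure.map_map (hf.comp hg) hf, Function.comp_assoc, hgf', Function.comp_id]
  · rintro _ ⟨R, hR, rfl⟩
    exact ⟨R.map g, pull_g hR, Measure.map_map hf hg⟩

/-- Propagation of OT ambiguity sets under an injective Borel map with Borel left inverse. -/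
theorem pushforward_ambiguity_injective
    {X Y : Type*}
    [MeasurableSpace X] [TopologicalSpace X] [PolishSpace X] [BorelSpace X]
    [MeasurableSpace Y] [TopologicalSpace Y] [PolishSpace Y] [BorelSpace Y]
    (P : Measure X) [IsProbabilityMeasure P]
    (c : X × X → ℝ≥0∞) (hc : Measurable c) (ε : ℝ≥0∞)
    (f : X → Y) (hf : Measurable f) (hinj : Function.Injective f)
    (g : Y → X) (hg : Measurable g) (hgf : ∀ x, g (f x) = x) :
    (fun μ => μ.map f) '' ambiguitySet c ε P
        = (fun μ => μ.map (f ∘ g)) ''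
            ambiguitySet (fun y => c (g y.1, g y.2)) ε (P.map f)
      ∧ (fun μ => μ.map f) '' ambiguitySet c ε P
          ⊆ ambiguitySet (fun y => c (g y.1, g y.2)) ε (P.map f) :=
  pushforward_ambiguity_injective_general P c hc ε f hf g hg hgf
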